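/- arXiv:2205.08742 — 4 statements merged into one kernel-verified Lean document; each statement's English description precedes it below -/
import Mathlib

section
/- Isodiametric inequality: for every bounded Borel set C ⊆ ℝ^j, λ_j(C) ≤ (ω_j / 2^j) · (diam C)^j, where λ_j is Lebesgue measure, ω_j is the volume of the unit ball in ℝ^j, and diam C = sup_{x,y ∈ C} ‖x - y‖ is the Euclidean diameter of C. -/
/-!
Steiner symmetrization in a coordinate direction replaces every line section of a set by the
centred interval of the same length. By Fubini it preserves volume, and it does not increase
the diameter: two symmetrized points can be compared with a pair of extreme points of the
original sections, which are at least as far apart. Symmetrizing successively in all coordinate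
directions gives a set of the same volume and no larger diameter that is invariant under every
coordinate reflection, hence under `x ↦ -x`. Such a set lies in the closed ball of radius half
its diameter, whose volume is the bound.
-/

open MeasureTheory

open Function Set Bornology
open scoped ENNReal

theorem Real.two_mul_abs_lt_sSup_sub_sInf {X : Set ℝ} (hX : IsBounded X) {s : ℝ}
    (hs : 2 * ENNReal.ofReal |s| < volume X) : 2 * |s| < sSup X - sInf X := by
  have hvol : volume X ≤ ENNReal.ofReal (sSup X - sInf X) :=
    (Real.volume_le_diam X).trans_eq (Real.ediam_eq hX)
  rw [← ENNReal.ofReal_ofNat, ← ENNReal.ofReal_mul zero_le_two] at hs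
  exact (ENNReal.ofReal_lt_ofReal_iff'.1 (hs.trans_le hvol)).1

/-- The two cross spans `sSup X - sInf Y` and `sSup Y - sInf X` add up to the total length of
`X` and `Y`, which exceeds `2 |s| + 2 |u| ≥ 2 |s - u|`; so one of them exceeds `|s - u|`. -/
theorem Real.exists_mem_closure_abs_sub_le {X Y : Set ℝ} (hX : IsBounded X) (hY : IsBounded Y)
    {s u : ℝ} (hs : 2 * ENNReal.ofReal |s| < volume X) (hu : 2 * ENNReal.ofReal |u| < volume Y) :
    ∃ a ∈ closure X, ∃ b ∈ closure Y, |s - u| ≤ |a - b| := by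
  have hX₀ : X.Nonempty := nonempty_of_measure_ne_zero (ne_bot_of_gt hs)
  have hY₀ : Y.Nonempty := nonempty_of_measure_ne_zero (ne_bot_of_gt hu)
  have hsX := Real.two_mul_abs_lt_sSup_sub_sInf hX hs
  have huY := Real.two_mul_abs_lt_sSup_sub_sInf hY hu
  have hsu := abs_sub s u
  rcases le_or_gt |s - u| (sSup X - sInf Y) with h | h
  · exact ⟨sSup X, csSup_mem_closure hX₀ hX.bddAbove, sInf Y, csInf_mem_closure hY₀ hY.bddBelow,
      h.trans (le_abs_self _)⟩
  · refine ⟨sInf X, csInf_mem_closure hX₀ hX.bddBelow, sSup Y, csSup_mem_closure hY₀ hY.bddAbove, ?_⟩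
    rw [abs_sub_comm (sInf X)]
    linarith [le_abs_self (sSup Y - sInf X)]

theorem Real.volume_setOf_two_mul_ofReal_abs_lt (m : ℝ≥0∞) :
    volume {t : ℝ | 2 * ENNReal.ofReal |t| < m} = m := by
  rcases eq_or_ne m ⊤ with rfl | hm
  · simp [lt_top_iff_ne_top, ENNReal.mul_eq_top]
  have : {t : ℝ | 2 * ENNReal.ofReal |t| < m} = Ioo (-(m.toReal / 2)) (m.toReal / 2) := by
    ext t
    rw [mem_ofPred_eq, ← ENNReal.ofReal_ofNat, ← ENNReal.ofReal_mul zero_le_two,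
      ENNReal.ofReal_lt_iff_lt_toReal (by positivity) hm, mem_Ioo, ← abs_lt]
    constructor <;> intro h <;> linarith
  rw [this, Real.volume_Ioo, sub_neg_eq_add, add_halves, ENNReal.ofReal_toReal hm]

section SymmetricSet

variable {E : Type*} [NormedAddCommGroup E] [NormedSpace ℝ E]

theorem subset_closedBall_half_diam_of_neg_mem {S : Set E} (hS : IsBounded S)
    (hneg : ∀ x ∈ S, -x ∈ S) : S ⊆ Metric.closedBall 0 (Metric.diam S / 2) := by
  intro x hx
  have h := Metric.dist_le_diam_of_mem hS hx (hneg x hx)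
  rw [dist_eq_norm, sub_neg_eq_add, ← two_smul ℝ, norm_smul, Real.norm_two] at h
  rw [Metric.mem_closedBall, dist_zero_right]
  linarith

variable [FiniteDimensional ℝ E] [MeasurableSpace E] [BorelSpace E]

theorem addHaar_le_of_neg_mem (μ : Measure E) [μ.IsAddHaarMeasure] {S : Set E}
    (hS : IsBounded S) (hneg : ∀ x ∈ S, -x ∈ S) :
    μ S ≤ μ (Metric.ball 0 1) / 2 ^ Module.finrank ℝ E * Metric.ediam S ^ Module.finrank ℝ E := by
  have hD : Metric.ediam S ≠ ⊤ := Metric.isBounded_iff_ediam_ne_top.1 hS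
  calc μ S ≤ μ (Metric.closedBall 0 (Metric.diam S / 2)) :=
        measure_mono (subset_closedBall_half_diam_of_neg_mem hS hneg)
    _ = ENNReal.ofReal ((Metric.diam S / 2) ^ Module.finrank ℝ E) * μ (Metric.ball 0 1) :=
        μ.addHaar_closedBall 0 (by positivity)
    _ = _ := by
        rw [div_pow, ENNReal.ofReal_div_of_pos (by positivity),
          ENNReal.ofReal_pow Metric.diam_nonneg, Metric.diam, ENNReal.ofReal_toReal hD,
          ENNReal.ofReal_pow zero_le_two, ENNReal.ofReal_ofNat, ENNReal.div_eq_inv_mul,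
          ENNReal.div_eq_inv_mul]
        ring

end SymmetricSet

/-! Sets are symmetrized in `ι → ℝ`, where Fubini is available, and their Euclidean diameter is
that of their preimage under `WithLp.ofLp : EuclideanSpace ℝ ι → ι → ℝ`. -/

section SteinerSymmetrization

variable {ι : Type*} [DecidableEq ι]

def lineSection (A : Set (ι → ℝ)) (i : ι) (x : ι → ℝ) : Set ℝ := update x i ⁻¹' A

def steinerSymm (i : ι) (A : Set (ι → ℝ)) : Set (ι → ℝ) :=
  {x | 2 * ENNReal.ofReal |x i| < volume (lineSection A i x)}

@[simp]
theorem lineSection_update_self (A : Set (ι → ℝ)) (i : ι) (x : ι → ℝ) (t : ℝ) :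
    lineSection A i (update x i t) = lineSection A i x := by
  ext u; simp [lineSection]

theorem measurableSet_lineSection {A : Set (ι → ℝ)} (hA : MeasurableSet A) (i : ι)
    (x : ι → ℝ) : MeasurableSet (lineSection A i x) :=
  hA.preimage (measurable_update x)

theorem lineSection_steinerSymm (A : Set (ι → ℝ)) (i : ι) (x : ι → ℝ) :
    lineSection (steinerSymm i A) i x =
      {t | 2 * ENNReal.ofReal |t| < volume (lineSection A i x)} := by
  ext t
  change _ < volume (lineSection A i (update x i t)) ↔ _
  rw [lineSection_update_self, update_self, mem_ofPred_eq]

theorem lmarginal_indicator_singleton {A : Set (ι → ℝ)} (hA : MeasurableSet A) (i : ι)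
    (x : ι → ℝ) : (∫⋯∫⁻_{i}, A.indicator 1 ∂fun _ ↦ volume) x = volume (lineSection A i x) := by
  rw [lmarginal_singleton, ← lintegral_indicator_one (measurableSet_lineSection hA i x)]
  rfl

theorem measurableSet_steinerSymm {A : Set (ι → ℝ)} (hA : MeasurableSet A) (i : ι) :
    MeasurableSet (steinerSymm i A) := by
  have hmarg :=
    (measurable_one.indicator hA).lmarginal (fun _ : ι ↦ (volume : Measure ℝ)) (s := {i})
  simp_rw [steinerSymm, ← lmarginal_indicator_singleton hA i]
  exact measurableSet_lt (by fun_prop) hmarg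

theorem toLp_update_mem_closure {A : Set (ι → ℝ)} {i : ι} {x : ι → ℝ} {t : ℝ}
    (ht : t ∈ closure (lineSection A i x)) :
    WithLp.toLp 2 (update x i t) ∈ closure (WithLp.ofLp ⁻¹' A : Set (EuclideanSpace ℝ ι)) :=
  MapsTo.closure (f := fun s ↦ WithLp.toLp 2 (update x i s)) (fun _ hs ↦ hs) (by fun_prop) ht

def IsReflectionInvariant (k : ι) (A : Set (ι → ℝ)) : Prop :=
  ∀ x, update x k (-x k) ∈ A ↔ x ∈ A

theorem isReflectionInvariant_steinerSymm_self (i : ι) (A : Set (ι → ℝ)) :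
    IsReflectionInvariant i (steinerSymm i A) := by
  intro x
  simp [steinerSymm]

theorem IsReflectionInvariant.steinerSymm {A : Set (ι → ℝ)} {k i : ι} (hki : k ≠ i)
    (hA : IsReflectionInvariant k A) : IsReflectionInvariant k (steinerSymm i A) := by
  intro x
  have hsec : lineSection A i (update x k (-x k)) = lineSection A i x := by
    ext t
    have := hA (update x i t)
    rwa [update_of_ne hki, ← update_comm hki] at this
  simp only [_root_.steinerSymm, mem_ofPred_eq, hsec, update_of_ne hki.symm]

variable [Fintype ι]

theorem volume_steinerSymm {A : Set (ι → ℝ)} (hA : MeasurableSet A) (i : ι) :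
    volume (steinerSymm i A) = volume A := by
  have hS := measurableSet_steinerSymm hA i
  rw [← lintegral_indicator_one hS, ← lintegral_indicator_one hA, volume_pi]
  refine lintegral_eq_of_lmarginal_eq {i} (measurable_one.indicator hS)
    (measurable_one.indicator hA) (funext fun x ↦ ?_)
  rw [lmarginal_indicator_singleton hS, lmarginal_indicator_singleton hA,
    lineSection_steinerSymm, Real.volume_setOf_two_mul_ofReal_abs_lt]

theorem dist_toLp_le_dist_toLp_update {x y : ι → ℝ} {i : ι} {a b : ℝ}
    (h : |x i - y i| ≤ |a - b|) :
    dist (WithLp.toLp 2 x : EuclideanSpace ℝ ι) (WithLp.toLp 2 y) ≤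
      dist (WithLp.toLp 2 (update x i a) : EuclideanSpace ℝ ι) (WithLp.toLp 2 (update y i b)) := by
  rw [EuclideanSpace.dist_eq, EuclideanSpace.dist_eq]
  gcongr with k
  rcases eq_or_ne k i with rfl | hk
  · simpa [Real.dist_eq] using h
  · simp [hk]

theorem isBounded_lineSection {A : Set (ι → ℝ)}
    (hA : IsBounded (WithLp.ofLp ⁻¹' A : Set (EuclideanSpace ℝ ι))) (i : ι) (x : ι → ℝ) :
    IsBounded (lineSection A i x) := by
  refine ((EuclideanSpace.proj i : EuclideanSpace ℝ ι →L[ℝ] ℝ).lipschitz.isBounded_image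
    hA).subset ?_
  intro t ht
  exact ⟨WithLp.toLp 2 (update x i t), ht, by simp⟩

theorem ediam_steinerSymm_le (i : ι) (A : Set (ι → ℝ)) :
    Metric.ediam (WithLp.ofLp ⁻¹' steinerSymm i A : Set (EuclideanSpace ℝ ι)) ≤
      Metric.ediam (WithLp.ofLp ⁻¹' A : Set (EuclideanSpace ℝ ι)) := by
  by_cases hA : IsBounded (WithLp.ofLp ⁻¹' A : Set (EuclideanSpace ℝ ι))
  swap
  · rw [Metric.isBounded_iff_ediam_ne_top, not_ne_iff] at hA
    simp [hA]
  refine Metric.ediam_le fun x hx y hy ↦ ?_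
  obtain ⟨a, ha, b, hb, hab⟩ := Real.exists_mem_closure_abs_sub_le
    (isBounded_lineSection hA i _) (isBounded_lineSection hA i _) hx hy
  calc edist x y ≤ edist (WithLp.toLp 2 (update x.ofLp i a) : EuclideanSpace ℝ ι)
        (WithLp.toLp 2 (update y.ofLp i b)) := by
        rw [edist_dist, edist_dist]
        exact ENNReal.ofReal_le_ofReal (dist_toLp_le_dist_toLp_update hab)
    _ ≤ Metric.ediam (closure _) :=
        Metric.edist_le_ediam_of_mem (toLp_update_mem_closure ha) (toLp_update_mem_closure hb)
    _ = _ := Metric.ediam_closure _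

theorem neg_mem_of_forall_isReflectionInvariant {A : Set (ι → ℝ)}
    (hA : ∀ k, IsReflectionInvariant k A) {x : ι → ℝ} (hx : x ∈ A) : -x ∈ A := by
  have hpiecewise : ∀ s : Finset ι, s.piecewise (-x) x ∈ A := by
    intro s
    induction s using Finset.induction_on with
    | empty => simpa using hx
    | insert a s ha ih =>
      rw [Finset.piecewise_insert]
      simpa [Finset.piecewise_eq_of_notMem _ _ _ ha] using (hA a _).2 ih
  simpa using hpiecewise Finset.univ

end SteinerSymmetrization

section IteratedSteinerSymmetrization

variable {ι : Type*} [DecidableEq ι] {A : Set (ι → ℝ)}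

theorem measurableSet_foldr_steinerSymm (hA : MeasurableSet A) (l : List ι) :
    MeasurableSet (l.foldr steinerSymm A) := by
  induction l with
  | nil => exact hA
  | cons i l ih => exact measurableSet_steinerSymm ih i

theorem isReflectionInvariant_foldr_steinerSymm {l : List ι} {k : ι} (hk : k ∈ l) :
    IsReflectionInvariant k (l.foldr steinerSymm A) := by
  induction l with
  | nil => simp at hk
  | cons i l ih =>
    rcases eq_or_ne k i with rfl | hki
    · exact isReflectionInvariant_steinerSymm_self k _
    · exact (ih ((List.mem_cons.1 hk).resolve_left hki)).steinerSymm hki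

variable [Fintype ι]

theorem volume_foldr_steinerSymm (hA : MeasurableSet A) (l : List ι) :
    volume (l.foldr steinerSymm A) = volume A := by
  induction l with
  | nil => rfl
  | cons i l ih =>
    rw [List.foldr_cons, volume_steinerSymm (measurableSet_foldr_steinerSymm hA l), ih]

theorem ediam_foldr_steinerSymm_le (l : List ι) :
    Metric.ediam (WithLp.ofLp ⁻¹' l.foldr steinerSymm A : Set (EuclideanSpace ℝ ι)) ≤
      Metric.ediam (WithLp.ofLp ⁻¹' A : Set (EuclideanSpace ℝ ι)) := by
  induction l with
  | nil => rfl
  | cons i l ih => exact (ediam_steinerSymm_le i _).trans ih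

end IteratedSteinerSymmetrization

/-- Isodiametric inequality: for every bounded Borel set `C ⊆ ℝ^j`,
`λ_j(C) ≤ (ω_j / 2^j) (diam C)^j`, where `ω_j` is the volume of the unit ball. -/
theorem stmt_3 (j : ℕ) (C : Set (EuclideanSpace ℝ (Fin j)))
    (hC : MeasurableSet C) (hCb : Bornology.IsBounded C) :
    volume C ≤ volume (Metric.ball (0 : EuclideanSpace ℝ (Fin j)) 1) / 2 ^ j
      * EMetric.diam C ^ j := by
  set C₀ : Set (Fin j → ℝ) := WithLp.toLp 2 ⁻¹' C
  have hC₀ : MeasurableSet C₀ := hC.preimage (PiLp.volume_preserving_toLp (Fin j)).measurable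
  set S : Set (EuclideanSpace ℝ (Fin j)) :=
    WithLp.ofLp ⁻¹' (List.finRange j).foldr steinerSymm C₀
  have hS_diam : Metric.ediam S ≤ Metric.ediam C := ediam_foldr_steinerSymm_le _
  have hS_vol : volume S = volume C := by
    rw [(PiLp.volume_preserving_ofLp (Fin j)).measure_preimage
      (measurableSet_foldr_steinerSymm hC₀ _).nullMeasurableSet, volume_foldr_steinerSymm hC₀,
      (PiLp.volume_preserving_toLp (Fin j)).measure_preimage hC.nullMeasurableSet]
  have hS_neg : ∀ x ∈ S, -x ∈ S := fun x hx ↦ neg_mem_of_forall_isReflectionInvariant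
    (fun k ↦ isReflectionInvariant_foldr_steinerSymm (List.mem_finRange k)) hx
  have hS_bdd : IsBounded S := Metric.isBounded_iff_ediam_ne_top.2
    (hS_diam.trans_lt (Metric.isBounded_iff_ediam_ne_top.1 hCb).lt_top).ne
  calc volume C = volume S := hS_vol.symm
    _ ≤ _ := addHaar_le_of_neg_mem volume hS_bdd hS_neg
    _ ≤ _ := by rw [finrank_euclideanSpace_fin]; gcongr; exact hS_diam
end

section
/- Let Z: Ω × W → ℝ^{m+k} (with k ≥ 1) be a C¹ random field on an open set W ⊆ ℝ^ℓ, J ⊆ W a compact set of Hausdorff dimension at most m, and z₀ ∈ ℝ^{m+k} fixed. Assume that for every t ∈ J the random vector Z(t) has a density p_{Z(t)} which is bounded uniformly in t on some neighborhood of z₀: there exist C > 0 and a neighborhood V of z₀ with p_{Z(t)}(v) ≤ C for all t ∈ J, v ∈ V. Then almost surely there is no point t ∈ J with Z(t) = z₀. -/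
open MeasureTheory
open scoped NNReal ENNReal

open Metric Set Module

/-! A `C¹` sample path is Lipschitz on the compact set `J`, with some constant `L ∈ ℕ`. Since
`dimH J < m + k`, the set `J` can be covered by countably many pieces `cₙ` with
`∑ (diam cₙ)^(m+k)` as small as we like. A path with constant `L` that hits `z₀` in `cₙ` lies,
at a fixed point `τₙ ∈ cₙ`, within `L · diam cₙ` of `z₀`; by the density bound this has
probability `≲ (L · diam cₙ)^(m+k)`. Summing over `n`, hitting `z₀` with Lipschitz constant `L`
has arbitrarily small, hence zero, probability, and a countable union over `L` concludes. -/

section HittingProbability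

variable {Ω X Y : Type*} [MeasurableSpace Ω] {P : Measure Ω}

theorem measure_preimage_le_of_map_eq_withDensity {E : Type*} [MeasurableSpace E]
    {μ : Measure E} {Z : Ω → E} (hZ : Measurable Z) {p : E → ℝ≥0∞}
    (hp : P.map Z = μ.withDensity p) {s : Set E} (hs : MeasurableSet s) {C : ℝ≥0∞}
    (hC : ∀ v ∈ s, p v ≤ C) :
    P (Z ⁻¹' s) ≤ C * μ s := by
  rw [← Measure.map_apply hZ hs, hp, withDensity_apply _ hs, ← setLIntegral_const]
  exact setLIntegral_mono' hs hC

theorem measure_mem_closedBall_le_of_map_eq_withDensity {E : Type*} [NormedAddCommGroup E]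
    [NormedSpace ℝ E] [MeasurableSpace E] [BorelSpace E] [FiniteDimensional ℝ E]
    (μ : Measure E) [μ.IsAddHaarMeasure] {Z : Ω → E} (hZ : Measurable Z) {p : E → ℝ≥0∞}
    (hp : P.map Z = μ.withDensity p) {z₀ : E} {ρ : ℝ} {C : ℝ≥0∞}
    (hC : ∀ v ∈ closedBall z₀ ρ, p v ≤ C) {r : ℝ} (hr : 0 ≤ r) (hrρ : r ≤ ρ) :
    P {ω | Z ω ∈ closedBall z₀ r} ≤
      C * μ (ball 0 1) * ENNReal.ofReal r ^ (finrank ℝ E : ℝ) := by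
  calc P {ω | Z ω ∈ closedBall z₀ r} ≤ C * μ (closedBall z₀ r) :=
        measure_preimage_le_of_map_eq_withDensity hZ hp measurableSet_closedBall
          fun v hv => hC v (closedBall_subset_closedBall hrρ hv)
    _ = C * μ (ball 0 1) * ENNReal.ofReal r ^ (finrank ℝ E : ℝ) := by
        rw [Measure.addHaar_closedBall μ z₀ hr, ENNReal.ofReal_pow hr, ENNReal.rpow_natCast]
        ring

theorem exists_cover_tsum_lt_of_hausdorffMeasure_eq_zero [EMetricSpace X] [MeasurableSpace X]
    [BorelSpace X] {d : ℝ} {S : Set X} (hS : μH[d] S = 0) {r δ : ℝ≥0∞} (hr : 0 < r)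
    (hδ : 0 < δ) :
    ∃ c : ℕ → Set X, S ⊆ ⋃ n, c n ∧ (∀ n, ediam (c n) ≤ r) ∧
      ∑' n, ⨆ _ : (c n).Nonempty, ediam (c n) ^ d < δ := by
  rw [Measure.hausdorffMeasure_apply] at hS
  simpa only [iInf_lt_iff, exists_prop] using
    ((le_iSup₂ (f := fun r (_ : 0 < r) => _) r hr).trans_eq hS).trans_lt hδ

variable [MetricSpace X] [PseudoMetricSpace Y]

theorem measure_exists_eq_lipschitzOnWith_le_diam (Z : Ω → X → Y) {S c : Set X} {y : Y}
    {K : ℝ≥0∞} {d ρ r₀ : ℝ} (hd : 0 ≤ d)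
    (hball : ∀ t ∈ S, ∀ r, 0 ≤ r → r ≤ ρ →
      P {ω | Z ω t ∈ closedBall y r} ≤ K * ENNReal.ofReal r ^ d)
    {L : ℝ≥0} (hr₀ : 0 ≤ r₀) (hLr₀ : L * r₀ ≤ ρ)
    (hc : ediam c ≤ ENNReal.ofReal r₀) :
    P {ω | (∃ t ∈ c ∩ S, Z ω t = y) ∧ LipschitzOnWith L (Z ω) S} ≤
      K * L ^ d * ⨆ _ : c.Nonempty, ediam c ^ d := by
  rcases (c ∩ S).eq_empty_or_nonempty with hcS | ⟨τ, hτc, hτS⟩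
  · simp [hcS]
  have hc_top : ediam c ≠ ⊤ := ne_top_of_le_ne_top ENNReal.ofReal_ne_top hc
  have hdiam : L * diam c ≤ ρ :=
    (mul_le_mul_of_nonneg_left (ENNReal.toReal_le_of_le_ofReal hr₀ hc) L.2).trans hLr₀
  calc P {ω | (∃ t ∈ c ∩ S, Z ω t = y) ∧ LipschitzOnWith L (Z ω) S}
      ≤ P {ω | Z ω τ ∈ closedBall y (L * diam c)} := by
        refine measure_mono ?_
        rintro ω ⟨⟨t, ⟨htc, htS⟩, hty⟩, hLip⟩
        calc dist (Z ω τ) y = dist (Z ω τ) (Z ω t) := by rw [hty]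
          _ ≤ L * dist τ t := hLip.dist_le_mul τ hτS t htS
          _ ≤ L * diam c := by gcongr; exact dist_le_diam_of_mem' hc_top hτc htc
    _ ≤ K * ENNReal.ofReal (L * diam c) ^ d := hball τ hτS _ (by positivity) hdiam
    _ = K * L ^ d * ⨆ _ : c.Nonempty, ediam c ^ d := by
        rw [iSup_pos ⟨τ, hτc⟩, ENNReal.ofReal_mul (NNReal.coe_nonneg L),
          ENNReal.ofReal_coe_nnreal, diam, ENNReal.ofReal_toReal hc_top,
          ENNReal.mul_rpow_of_nonneg _ _ hd, mul_assoc]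

theorem measure_exists_eq_lipschitzOnWith_eq_zero [MeasurableSpace X] [BorelSpace X]
    (Z : Ω → X → Y) {S : Set X} {y : Y} {K : ℝ≥0∞} (hK : K ≠ ⊤) {d ρ : ℝ} (hd : 0 ≤ d)
    (hρ : 0 < ρ) (hS : μH[d] S = 0)
    (hball : ∀ t ∈ S, ∀ r, 0 ≤ r → r ≤ ρ →
      P {ω | Z ω t ∈ closedBall y r} ≤ K * ENNReal.ofReal r ^ d)
    (L : ℝ≥0) :
    P {ω | (∃ t ∈ S, Z ω t = y) ∧ LipschitzOnWith L (Z ω) S} = 0 := by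
  set A := {ω | (∃ t ∈ S, Z ω t = y) ∧ LipschitzOnWith L (Z ω) S}
  set r₀ := ρ / (L + 1)
  have hr₀ : 0 < r₀ := by positivity
  have hLr₀ : L * r₀ ≤ ρ := by
    rw [← mul_div_assoc, div_le_iff₀ (by positivity), mul_comm]
    gcongr
    simp
  have hsmall : ∀ δ > 0, P A ≤ K * L ^ d * δ := by
    intro δ hδ
    obtain ⟨c, hcov, hdiam, hsum⟩ := exists_cover_tsum_lt_of_hausdorffMeasure_eq_zero hS
      (ENNReal.ofReal_pos.2 hr₀) hδ
    calc P A ≤ P (⋃ n, {ω | (∃ t ∈ c n ∩ S, Z ω t = y) ∧ LipschitzOnWith L (Z ω) S}) := by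
          refine measure_mono ?_
          rintro ω ⟨⟨t, htS, hty⟩, hLip⟩
          obtain ⟨n, hn⟩ := mem_iUnion.1 (hcov htS)
          exact mem_iUnion.2 ⟨n, ⟨t, ⟨hn, htS⟩, hty⟩, hLip⟩
      _ ≤ ∑' n, K * L ^ d * ⨆ _ : (c n).Nonempty, ediam (c n) ^ d :=
          (measure_iUnion_le _).trans <| ENNReal.tsum_le_tsum fun n =>
            measure_exists_eq_lipschitzOnWith_le_diam Z hd hball hr₀.le hLr₀ (hdiam n)
      _ ≤ K * L ^ d * δ := by
          rw [ENNReal.tsum_mul_left]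
          exact mul_le_mul_right hsum.le _
  by_contra hA
  obtain ⟨δ, hδ, hlt⟩ := ENNReal.exists_pos_mul_lt
    (ENNReal.mul_ne_top hK (ENNReal.rpow_ne_top_of_nonneg hd ENNReal.coe_ne_top)) hA
  exact (hsmall δ hδ).not_gt (by rwa [mul_comm])

end HittingProbability

theorem ContDiffOn.locallyLipschitzOn_of_isOpen {E F : Type*} [NormedAddCommGroup E]
    [NormedSpace ℝ E] [NormedAddCommGroup F] [NormedSpace ℝ F] {f : E → F} {W : Set E}
    (hW : IsOpen W) (hf : ContDiffOn ℝ 1 f W) : LocallyLipschitzOn W f := fun _ hx =>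
  let ⟨K, t, ht, hK⟩ := (hf.contDiffAt (hW.mem_nhds hx)).exists_lipschitzOnWith
  ⟨K, t, nhdsWithin_le_nhds ht, hK⟩

theorem stmt_7_general (ℓ m k : ℕ) (hk : 1 ≤ k)
    {Ω : Type*} [MeasurableSpace Ω] (P : Measure Ω)
    (W : Set (EuclideanSpace ℝ (Fin ℓ))) (hW : IsOpen W)
    (Z : Ω → EuclideanSpace ℝ (Fin ℓ) → EuclideanSpace ℝ (Fin (m + k)))
    (hmeas : ∀ t, Measurable fun ω => Z ω t)
    (hC1 : ∀ᵐ ω ∂P, ContDiffOn ℝ 1 (Z ω) W)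
    (J : Set (EuclideanSpace ℝ (Fin ℓ))) (hJ : IsCompact J) (hJW : J ⊆ W)
    (hdim : dimH J ≤ m)
    (z₀ : EuclideanSpace ℝ (Fin (m + k)))
    (hdens : ∃ C : ℝ, 0 < C ∧ ∃ V ∈ nhds z₀, ∀ t ∈ J,
      ∃ p : EuclideanSpace ℝ (Fin (m + k)) → ℝ≥0∞,
        Measure.map (fun ω => Z ω t) P = volume.withDensity p ∧
        ∀ v ∈ V, p v ≤ ENNReal.ofReal C) :
    P {ω | ∃ t ∈ J, Z ω t = z₀} = 0 := by
  obtain ⟨C, -, V, hV, hdens⟩ := hdens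
  obtain ⟨ρ, hρ, hρV⟩ := nhds_basis_closedBall.mem_iff.1 hV
  have hball : ∀ t ∈ J, ∀ r, 0 ≤ r → r ≤ ρ → P {ω | Z ω t ∈ closedBall z₀ r} ≤
      ENNReal.ofReal C * volume (ball (0 : EuclideanSpace ℝ (Fin (m + k))) 1) *
        ENNReal.ofReal r ^ (finrank ℝ (EuclideanSpace ℝ (Fin (m + k))) : ℝ) := by
    intro t ht r hr hrρ
    obtain ⟨p, hp, hpV⟩ := hdens t ht
    exact measure_mem_closedBall_le_of_map_eq_withDensity volume (hmeas t) hp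
      (fun v hv => hpV v (hρV hv)) hr hrρ
  have hJ0 : μH[(finrank ℝ (EuclideanSpace ℝ (Fin (m + k))) : ℝ)] J = 0 := by
    have hlt : dimH J < ((m + k : ℕ) : ℝ≥0) := by
      rw [ENNReal.coe_natCast]
      exact hdim.trans_lt (by exact_mod_cast (by omega : m < m + k))
    simpa only [finrank_euclideanSpace_fin, NNReal.coe_natCast] using
      hausdorffMeasure_of_dimH_lt hlt
  have hLip : ∀ᵐ ω ∂P, ∃ L : ℕ, LipschitzOnWith L (Z ω) J := by
    filter_upwards [hC1] with ω hω
    obtain ⟨K, hK⟩ :=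
      ((hω.locallyLipschitzOn_of_isOpen hW).mono hJW).exists_lipschitzOnWith_of_compact hJ
    exact ⟨⌈K⌉₊, hK.weaken (Nat.le_ceil K)⟩
  exact measure_mono_null_ae (hLip.mono fun ω ⟨L, hL⟩ hω => mem_iUnion.2 ⟨L, hω, hL⟩)
    (measure_iUnion_null fun L : ℕ => measure_exists_eq_lipschitzOnWith_eq_zero Z
      (by finiteness) (Nat.cast_nonneg _) hρ hJ0 hball L)

/-- Let `Z` be a random field on an open set `W ⊆ ℝ^ℓ` with values in `ℝ^{m+k}` (`k ≥ 1`) and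
`C¹` sample paths, `J ⊆ W` compact with Hausdorff dimension at most `m`, and `z₀` a fixed
point.  If the one-dimensional marginals `Z(t)`, `t ∈ J`, admit densities with respect to
Lebesgue measure that are bounded, uniformly in `t ∈ J`, on a neighborhood of `z₀`, then
almost surely there is no `t ∈ J` with `Z(t) = z₀`. -/
theorem stmt_7 (ℓ m k : ℕ) (hk : 1 ≤ k)
    {Ω : Type*} [MeasurableSpace Ω] (P : Measure Ω) [IsProbabilityMeasure P]
    (W : Set (EuclideanSpace ℝ (Fin ℓ))) (hW : IsOpen W)
    (Z : Ω → EuclideanSpace ℝ (Fin ℓ) → EuclideanSpace ℝ (Fin (m + k)))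
    (hmeas : ∀ t, Measurable fun ω => Z ω t)
    (hC1 : ∀ᵐ ω ∂P, ContDiffOn ℝ 1 (Z ω) W)
    (J : Set (EuclideanSpace ℝ (Fin ℓ))) (hJ : IsCompact J) (hJW : J ⊆ W)
    (hdim : dimH J ≤ m)
    (z₀ : EuclideanSpace ℝ (Fin (m + k)))
    (hdens : ∃ C : ℝ, 0 < C ∧ ∃ V ∈ nhds z₀, ∀ t ∈ J,
      ∃ p : EuclideanSpace ℝ (Fin (m + k)) → ℝ≥0∞,
        Measure.map (fun ω => Z ω t) P = volume.withDensity p ∧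
        ∀ v ∈ V, p v ≤ ENNReal.ofReal C) :
    P {ω | ∃ t ∈ J, Z ω t = z₀} = 0 :=
  stmt_7_general ℓ m k hk P W hW Z hmeas hC1 J hJ hJW hdim z₀ hdens
end

section
/- Geman's lemma: let r be the covariance of a centered stationary Gaussian process with r(0) = 1, r twice differentiable, λ₂ = -r''(0) < ∞, and -r'(τ)/τ → λ₂ as τ → 0⁺. Let σ²(τ) = -r''(0) - (r'(τ))²/(1 - r²(τ)). Then there exists δ > 0 such that ∫₀^δ (r''(τ) - r''(0))/τ dτ < ∞ if and only if ∫₀^δ σ²(τ)/(1 - r²(τ))^{1/2} dτ < ∞. -/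
/-!
Write `g = r'' - r''(0) ≥ 0` and `G(τ) = ∫₀^τ s g(s) ds`. Near `0` we have `-r'(τ) ≍ τ` and
`1 - r(τ)² ≍ τ²`. The numerator `N = (1 - r²) σ²` vanishes at `0` with
`N' = -2 r' (g - λ₂ (1 - r))`, so comparing derivatives gives `λ₂ G - λ₂³ τ⁴ ≤ N ≤ 4 λ₂ G`;
dividing by `(1 - r²)^{3/2} ≍ τ³`, the second integrand is squeezed between multiples of
`G(τ)/τ³`, up to a bounded error. Finally, by Tonelli,
`∫₀^δ G(τ)/τ³ dτ = ½ ∫₀^δ g(s) (1/s - s/δ²) ds`, so `G(τ)/τ³` is integrable iff `g(τ)/τ` is.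
-/

open MeasureTheory Set Filter Topology
open scoped ENNReal

theorem integrableOn_iff_of_le_of_le {α : Type*} [MeasurableSpace α] {μ : Measure α}
    {s : Set α} {f h : α → ℝ} {c₁ c₂ C : ℝ} (hs : MeasurableSet s) (hμs : μ s ≠ ⊤)
    (hc₁ : 0 < c₁) (hf : AEStronglyMeasurable f (μ.restrict s))
    (hh : AEStronglyMeasurable h (μ.restrict s)) (hh0 : ∀ x ∈ s, 0 ≤ h x)
    (hlo : ∀ x ∈ s, c₁ * h x - C ≤ f x) (hhi : ∀ x ∈ s, f x ≤ c₂ * h x) :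
    IntegrableOn f s μ ↔ IntegrableOn h s μ := by
  have hC : IntegrableOn (fun _ => |C|) s μ := integrableOn_const hμs
  constructor
  · intro hfi
    refine Integrable.mono' ((hfi.abs.add hC).const_mul c₁⁻¹) hh
      ((ae_restrict_iff' hs).2 (.of_forall fun x hx => ?_))
    rw [Real.norm_eq_abs, abs_of_nonneg (hh0 x hx), le_inv_mul_iff₀ hc₁, Pi.add_apply]
    linarith [hlo x hx, le_abs_self (f x), le_abs_self C]
  · intro hhi'
    refine Integrable.mono' ((hhi'.const_mul |c₂|).add hC) hf
      ((ae_restrict_iff' hs).2 (.of_forall fun x hx => ?_))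
    rw [Real.norm_eq_abs, abs_le, Pi.add_apply]
    constructor <;> linarith [hlo x hx, hhi x hx, neg_abs_le C, le_abs_self C,
      mul_nonneg hc₁.le (hh0 x hx), mul_nonneg (abs_nonneg c₂) (hh0 x hx),
      mul_le_mul_of_nonneg_right (le_abs_self c₂) (hh0 x hx)]

theorem setLIntegral_Ioc_lintegral_Ioc_mul_swap {f k : ℝ → ℝ≥0∞} (hf : Measurable f)
    (hk : Measurable k) (a b : ℝ) :
    ∫⁻ τ in Ioc a b, (∫⁻ s in Ioc a τ, f s) * k τ
      = ∫⁻ s in Ioc a b, f s * ∫⁻ τ in Icc s b, k τ := by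
  have hF : Measurable (Function.uncurry fun τ s => (Iic τ).indicator f s * k τ) := by
    have hS : MeasurableSet {p : ℝ × ℝ | p.2 ≤ p.1} :=
      measurableSet_le measurable_snd measurable_fst
    convert ((hf.comp measurable_snd).indicator hS).mul (hk.comp measurable_fst) using 1
    ext p
    simp [indicator_apply, Function.uncurry_def]
  calc ∫⁻ τ in Ioc a b, (∫⁻ s in Ioc a τ, f s) * k τ
      = ∫⁻ τ in Ioc a b, ∫⁻ s in Ioc a b, (Iic τ).indicator f s * k τ := by
        refine setLIntegral_congr_fun measurableSet_Ioc fun τ hτ => ?_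
        rw [lintegral_mul_const _ (hf.indicator measurableSet_Iic),
          lintegral_indicator measurableSet_Iic, Measure.restrict_restrict measurableSet_Iic,
          Iic_inter_Ioc_of_le hτ.2]
    _ = ∫⁻ s in Ioc a b, ∫⁻ τ in Ioc a b, (Iic τ).indicator f s * k τ :=
        lintegral_lintegral_swap hF.aemeasurable
    _ = ∫⁻ s in Ioc a b, f s * ∫⁻ τ in Icc s b, k τ := by
        refine setLIntegral_congr_fun measurableSet_Ioc fun s hs => ?_
        have hswap : ∀ τ, (Iic τ).indicator f s * k τ = f s * (Ici s).indicator k τ := by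
          intro τ
          by_cases h : s ≤ τ <;> simp [h]
        have hIcc : Ici s ∩ Ioc a b = Icc s b := by
          ext τ
          simp only [mem_inter_iff, mem_Ici, mem_Ioc, mem_Icc]
          exact ⟨fun h => ⟨h.1, h.2.2⟩, fun h => ⟨h.1, hs.1.trans_le h.1, h.2⟩⟩
        simp_rw [hswap]
        rw [lintegral_const_mul _ (hk.indicator measurableSet_Ici),
          lintegral_indicator measurableSet_Ici, Measure.restrict_restrict measurableSet_Ici,
          hIcc]

theorem integral_inv_pow_three {a b : ℝ} (ha : 0 < a) (hab : a ≤ b) :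
    ∫ τ in a..b, (τ ^ 3)⁻¹ = (a⁻¹ ^ 2 - b⁻¹ ^ 2) / 2 := by
  have h0 : (0 : ℝ) ∉ uIcc a b := by
    rw [uIcc_of_le hab]
    exact fun h => ha.not_ge h.1
  have := integral_zpow (a := a) (b := b) (n := -3) (Or.inr ⟨by norm_num, h0⟩)
  simp only [zpow_neg, zpow_ofNat] at this
  rw [this]
  norm_num
  field_simp
  ring

theorem lintegral_Icc_inv_pow_three {a b : ℝ} (ha : 0 < a) (hab : a ≤ b) :
    ∫⁻ τ in Icc a b, ENNReal.ofReal (τ ^ 3)⁻¹ = ENNReal.ofReal ((a⁻¹ ^ 2 - b⁻¹ ^ 2) / 2) := by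
  have hcont : ContinuousOn (fun τ : ℝ => (τ ^ 3)⁻¹) (Icc a b) :=
    (continuousOn_pow 3).inv₀ fun τ hτ => (pow_pos (ha.trans_le hτ.1) 3).ne'
  rw [← integral_inv_pow_three ha hab, intervalIntegral.integral_of_le hab,
    ← integral_Icc_eq_integral_Ioc, ofReal_integral_eq_lintegral_ofReal hcont.integrableOn_Icc]
  exact (ae_restrict_iff' measurableSet_Icc).2 <| .of_forall fun τ hτ =>
    inv_nonneg.2 (pow_nonneg (ha.le.trans hτ.1) 3)

theorem integral_id_mul_nonneg {g : ℝ → ℝ} {τ : ℝ} (hτ : 0 ≤ τ)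
    (hg0 : ∀ s ∈ Ioc 0 τ, 0 ≤ g s) : 0 ≤ ∫ s in 0..τ, s * g s := by
  rw [intervalIntegral.integral_of_le hτ]
  exact setIntegral_nonneg measurableSet_Ioc fun s hs => mul_nonneg hs.1.le (hg0 s hs)

theorem setLIntegral_ofReal_primitive_div_pow_three {g : ℝ → ℝ} (hg : Continuous g) {δ : ℝ}
    (hg0 : ∀ τ ∈ Ioc 0 δ, 0 ≤ g τ) :
    ∫⁻ τ in Ioc 0 δ, ENNReal.ofReal ((∫ s in 0..τ, s * g s) / τ ^ 3)
      = ∫⁻ s in Ioc 0 δ, ENNReal.ofReal (s * g s) * ENNReal.ofReal ((s⁻¹ ^ 2 - δ⁻¹ ^ 2) / 2) := by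
  have hsg : Continuous fun s => s * g s := continuous_id.mul hg
  have hG : ∀ τ ∈ Ioc 0 δ, ENNReal.ofReal ((∫ s in 0..τ, s * g s) / τ ^ 3)
      = (∫⁻ s in Ioc 0 τ, ENNReal.ofReal (s * g s)) * ENNReal.ofReal (τ ^ 3)⁻¹ := by
    intro τ hτ
    have hsg0 : ∀ s ∈ Ioc 0 τ, 0 ≤ s * g s := fun s hs =>
      mul_nonneg hs.1.le (hg0 s ⟨hs.1, hs.2.trans hτ.2⟩)
    rw [intervalIntegral.integral_of_le hτ.1.le, div_eq_mul_inv,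
      ENNReal.ofReal_mul (setIntegral_nonneg measurableSet_Ioc hsg0),
      ofReal_integral_eq_lintegral_ofReal hsg.integrableOn_Ioc
        ((ae_restrict_iff' measurableSet_Ioc).2 (.of_forall hsg0))]
  rw [setLIntegral_congr_fun measurableSet_Ioc hG,
    setLIntegral_Ioc_lintegral_Ioc_mul_swap (by fun_prop) (by fun_prop)]
  refine setLIntegral_congr_fun measurableSet_Ioc fun s hs => ?_
  rw [lintegral_Icc_inv_pow_three hs.1 hs.2]

theorem integrableOn_div_iff_integrableOn_primitive_div_pow_three {g : ℝ → ℝ}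
    (hg : Continuous g) {δ : ℝ} (hδ : 0 < δ) (hg0 : ∀ τ ∈ Ioc 0 δ, 0 ≤ g τ) :
    IntegrableOn (fun τ => g τ / τ) (Ioc 0 δ)
      ↔ IntegrableOn (fun τ => (∫ s in 0..τ, s * g s) / τ ^ 3) (Ioc 0 δ) := by
  have hsg : Continuous fun s => s * g s := continuous_id.mul hg
  have hsg0 : ∀ s ∈ Ioc 0 δ, 0 ≤ s * g s := fun s hs => mul_nonneg hs.1.le (hg0 s hs)
  have hsplit : ∀ s ∈ Ioc 0 δ, ENNReal.ofReal (g s / s)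
      = 2 * (ENNReal.ofReal (s * g s) * ENNReal.ofReal ((s⁻¹ ^ 2 - δ⁻¹ ^ 2) / 2))
        + ENNReal.ofReal (s * g s * δ⁻¹ ^ 2) := by
    intro s hs
    have := hsg0 s hs
    have : 0 ≤ s⁻¹ ^ 2 - δ⁻¹ ^ 2 :=
      sub_nonneg.2 (pow_le_pow_left₀ (inv_nonneg.2 hδ.le) (inv_anti₀ hs.1 hs.2) 2)
    rw [← ENNReal.ofReal_mul (hsg0 s hs), ← ENNReal.ofReal_ofNat 2,
      ← ENNReal.ofReal_mul zero_le_two, ← ENNReal.ofReal_add (by positivity) (by positivity)]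
    have := hs.1.ne'
    congr 1
    field_simp
    ring
  have hkey : ∫⁻ s in Ioc 0 δ, ENNReal.ofReal (g s / s)
      = 2 * (∫⁻ τ in Ioc 0 δ, ENNReal.ofReal ((∫ s in 0..τ, s * g s) / τ ^ 3))
        + ∫⁻ s in Ioc 0 δ, ENNReal.ofReal (s * g s * δ⁻¹ ^ 2) := by
    rw [setLIntegral_congr_fun measurableSet_Ioc hsplit, lintegral_add_right _ (by fun_prop),
      lintegral_const_mul _ (by fun_prop), setLIntegral_ofReal_primitive_div_pow_three hg hg0]
  have hfin : ∫⁻ s in Ioc 0 δ, ENNReal.ofReal (s * g s * δ⁻¹ ^ 2) ≠ ⊤ :=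
    ((hsg.mul continuous_const).integrableOn_Ioc).lintegral_lt_top.ne
  have hGc : Continuous fun τ => ∫ s in 0..τ, s * g s :=
    intervalIntegral.continuous_primitive (fun a b => hsg.intervalIntegrable a b) 0
  have hG0 : ∀ τ ∈ Ioc 0 δ, 0 ≤ (∫ s in 0..τ, s * g s) / τ ^ 3 := fun τ hτ =>
    div_nonneg (integral_id_mul_nonneg hτ.1.le fun s hs => hg0 s ⟨hs.1, hs.2.trans hτ.2⟩)
      (pow_pos hτ.1 3).le
  rw [IntegrableOn, IntegrableOn, ← lintegral_ofReal_ne_top_iff_integrable (f := fun τ => g τ / τ)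
      (hg.measurable.div measurable_id).aestronglyMeasurable
      ((ae_restrict_iff' measurableSet_Ioc).2 <| .of_forall fun τ hτ =>
        div_nonneg (hg0 τ hτ) hτ.1.le),
    ← lintegral_ofReal_ne_top_iff_integrable (f := fun τ => (∫ s in 0..τ, s * g s) / τ ^ 3)
      (hGc.measurable.div (measurable_id.pow_const 3)).aestronglyMeasurable
      ((ae_restrict_iff' measurableSet_Ioc).2 (.of_forall hG0)), hkey]
  simp only [ne_eq, ENNReal.add_eq_top, hfin, or_false, ENNReal.mul_eq_top]
  simp

theorem le_of_hasDerivAt_le_of_le {f g f' g' : ℝ → ℝ} {a b : ℝ}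
    (hf : ∀ x, HasDerivAt f (f' x) x) (hg : ∀ x, HasDerivAt g (g' x) x) (ha : f a ≤ g a)
    (hf'g' : ∀ x ∈ Ioo a b, f' x ≤ g' x) : ∀ x ∈ Icc a b, f x ≤ g x := by
  have hmono : MonotoneOn (fun x => g x - f x) (Icc a b) := by
    refine monotoneOn_of_hasDerivWithinAt_nonneg (convex_Icc a b)
      (fun x _ => ((hg x).sub (hf x)).continuousAt.continuousWithinAt)
      (fun x _ => ((hg x).sub (hf x)).hasDerivWithinAt) ?_
    rw [interior_Icc]
    exact fun x hx => sub_nonneg.2 (hf'g' x hx)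
  intro x hx
  have := hmono (left_mem_Icc.2 (hx.1.trans hx.2)) hx hx.1
  linarith

theorem eq_zero_of_tendsto_div_nhdsGT {f : ℝ → ℝ} {L : ℝ}
    (hf : ContinuousWithinAt f (Ioi 0) 0) (h : Tendsto (fun τ => f τ / τ) (𝓝[>] 0) (𝓝 L)) :
    f 0 = 0 := by
  have hid : Tendsto (fun τ : ℝ => τ) (𝓝[>] 0) (𝓝 0) :=
    tendsto_nhdsWithin_of_tendsto_nhds tendsto_id
  have := (h.mul hid).congr' (eventually_nhdsWithin_of_forall fun τ (hτ : 0 < τ) =>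
    div_mul_cancel₀ (f τ) hτ.ne')
  rw [mul_zero] at this
  exact tendsto_nhds_unique hf this

theorem mul_sqrt_bounds_of_sq_bounds {a b x τ : ℝ} (ha : 0 ≤ a) (hτ : 0 ≤ τ)
    (hlo : a * τ ^ 2 ≤ x) (hhi : x ≤ b * τ ^ 2) :
    a * √a * τ ^ 3 ≤ x * √x ∧ x * √x ≤ b * √b * τ ^ 3 := by
  have hsq : ∀ c, c * τ ^ 2 * √(c * τ ^ 2) = c * √c * τ ^ 3 := fun c => by
    rw [Real.sqrt_mul' c (sq_nonneg τ), Real.sqrt_sq hτ]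
    ring
  have hx : 0 ≤ x := (by positivity : 0 ≤ a * τ ^ 2).trans hlo
  rw [← hsq a, ← hsq b]
  exact ⟨mul_le_mul hlo (Real.sqrt_le_sqrt hlo) (Real.sqrt_nonneg _) hx,
    mul_le_mul hhi (Real.sqrt_le_sqrt hhi) (Real.sqrt_nonneg _) (hx.trans hhi)⟩

theorem div_bounds_of_pow_three_bounds {F G D t a b e K₁ K₂ : ℝ} (ht : 0 < t) (hK₁ : 0 < K₁)
    (hG : 0 ≤ G) (ha : 0 ≤ a) (hb : 0 ≤ b) (he : 0 ≤ e) (hD₁ : K₁ * t ^ 3 ≤ D)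
    (hD₂ : D ≤ K₂ * t ^ 3) (hF₁ : a * G - e * t ^ 4 ≤ F) (hF₂ : F ≤ b * G) :
    a / K₂ * (G / t ^ 3) - e / K₁ * t ≤ F / D ∧ F / D ≤ b / K₁ * (G / t ^ 3) := by
  have hKt : 0 < K₁ * t ^ 3 := by positivity
  have hD : 0 < D := hKt.trans_le hD₁
  constructor
  · calc a / K₂ * (G / t ^ 3) - e / K₁ * t
        = a * G / (K₂ * t ^ 3) - e * t ^ 4 / (K₁ * t ^ 3) := by field_simp
      _ ≤ a * G / D - e * t ^ 4 / D := by gcongr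
      _ = (a * G - e * t ^ 4) / D := by ring
      _ ≤ F / D := by gcongr
  · calc F / D ≤ b * G / D := by gcongr
      _ ≤ b * G / (K₁ * t ^ 3) := by gcongr
      _ = b / K₁ * (G / t ^ 3) := by field_simp

section Covariance

variable {r : ℝ → ℝ} {lam2 δ : ℝ}

theorem pos_of_neg_le_deriv_deriv {δ₀ : ℝ} (hr : ContDiff ℝ 2 r)
    (hr'0 : deriv r 0 = 0) (hδ₀ : 0 < δ₀) (hr'' : ∀ τ ∈ Ioc 0 δ₀, -lam2 ≤ deriv (deriv r) τ)
    (hlt : r δ₀ < r 0) : 0 < lam2 := by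
  by_contra! hlam
  have hr'_nonneg : ∀ x ∈ Icc 0 δ₀, 0 ≤ deriv r x :=
    le_of_hasDerivAt_le_of_le (fun _ => hasDerivAt_const _ 0)
      (fun x => (hr.deriv'.differentiable one_ne_zero x).hasDerivAt) hr'0.ge
      (fun x hx => by linarith [hr'' x (Ioo_subset_Ioc_self hx)])
  have := le_of_hasDerivAt_le_of_le (fun _ => hasDerivAt_const _ (r 0))
    (fun x => (hr.differentiable two_ne_zero x).hasDerivAt) le_rfl
    (fun x hx => hr'_nonneg x (Ioo_subset_Icc_self hx)) δ₀ (right_mem_Icc.2 hδ₀.le)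
  linarith

/-- `(1 - r(τ)²) σ²(τ)` in the paper's notation, with `lam2 = λ₂ = -r''(0)`. -/
noncomputable def condVarNum (r : ℝ → ℝ) (lam2 τ : ℝ) : ℝ :=
  lam2 * (1 - r τ ^ 2) - deriv r τ ^ 2

theorem one_sub_bounds_of_deriv_bounds (hr : Differentiable ℝ r) (hr0 : r 0 = 1)
    (hr' : ∀ τ ∈ Ioc 0 δ, lam2 / 2 * τ ≤ -deriv r τ ∧ -deriv r τ ≤ 2 * lam2 * τ) :
    ∀ τ ∈ Icc 0 δ, lam2 / 4 * τ ^ 2 ≤ 1 - r τ ∧ 1 - r τ ≤ lam2 * τ ^ 2 := by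
  have h1r : ∀ x, HasDerivAt (fun τ => 1 - r τ) (-deriv r x) x := fun x => by
    simpa using (hr x).hasDerivAt.const_sub 1
  have hlo : ∀ x, HasDerivAt (fun τ => lam2 / 4 * τ ^ 2) (lam2 / 2 * x) x := fun x =>
    ((hasDerivAt_pow 2 x).const_mul (lam2 / 4)).congr_deriv (by norm_num; ring)
  have hhi : ∀ x, HasDerivAt (fun τ => lam2 * τ ^ 2) (2 * lam2 * x) x := fun x =>
    ((hasDerivAt_pow 2 x).const_mul lam2).congr_deriv (by norm_num; ring)
  intro τ hτ
  exact ⟨le_of_hasDerivAt_le_of_le hlo h1r (by simp [hr0])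
      (fun x hx => (hr' x (Ioo_subset_Ioc_self hx)).1) τ hτ,
    le_of_hasDerivAt_le_of_le h1r hhi (by simp [hr0])
      (fun x hx => (hr' x (Ioo_subset_Ioc_self hx)).2) τ hτ⟩

theorem one_sub_sq_bounds_of_deriv_bounds (hr : Differentiable ℝ r) (hr0 : r 0 = 1)
    (hr' : ∀ τ ∈ Ioc 0 δ, lam2 / 2 * τ ≤ -deriv r τ ∧ -deriv r τ ≤ 2 * lam2 * τ)
    (hrnn : ∀ τ ∈ Ioc 0 δ, 0 ≤ r τ) (hlam : 0 ≤ lam2) :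
    ∀ τ ∈ Ioc 0 δ, lam2 / 4 * τ ^ 2 ≤ 1 - r τ ^ 2 ∧ 1 - r τ ^ 2 ≤ 2 * lam2 * τ ^ 2 := by
  intro τ hτ
  obtain ⟨hlo, hhi⟩ := one_sub_bounds_of_deriv_bounds hr hr0 hr' τ (Ioc_subset_Icc_self hτ)
  have h1 : 0 ≤ 1 - r τ := hlo.trans' (by positivity)
  constructor <;> nlinarith [mul_nonneg (hrnn τ hτ) h1]

theorem hasDerivAt_condVarNum (hr : ContDiff ℝ 2 r) (x : ℝ) :
    HasDerivAt (condVarNum r lam2)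
      (-2 * deriv r x * (deriv (deriv r) x + lam2 - lam2 * (1 - r x))) x := by
  have h1 := (((hr.differentiable two_ne_zero x).hasDerivAt.pow 2).const_sub 1).const_mul lam2
  have h2 := (hr.deriv'.differentiable one_ne_zero x).hasDerivAt.pow 2
  exact (h1.sub h2).congr_deriv (by norm_num; ring)

theorem condVarNum_bounds (hr : ContDiff ℝ 2 r) (hr0 : r 0 = 1) (hr'0 : deriv r 0 = 0)
    (hlam : 0 < lam2) (hg : ∀ τ ∈ Ioc 0 δ, 0 ≤ deriv (deriv r) τ + lam2)
    (hr' : ∀ τ ∈ Ioc 0 δ, lam2 / 2 * τ ≤ -deriv r τ ∧ -deriv r τ ≤ 2 * lam2 * τ) :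
    ∀ τ ∈ Icc 0 δ,
      lam2 * (∫ s in 0..τ, s * (deriv (deriv r) s + lam2)) - lam2 ^ 3 * τ ^ 4
          ≤ condVarNum r lam2 τ ∧
        condVarNum r lam2 τ ≤ 4 * lam2 * ∫ s in 0..τ, s * (deriv (deriv r) s + lam2) := by
  have hG : ∀ x, HasDerivAt (fun τ => ∫ s in 0..τ, s * (deriv (deriv r) s + lam2))
      (x * (deriv (deriv r) x + lam2)) x := fun x =>
    ((continuous_id.mul ((hr.deriv'.continuous_deriv le_rfl).add continuous_const)
      ).integral_hasStrictDerivAt 0 x).hasDerivAt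
  have h1r := one_sub_bounds_of_deriv_bounds (hr.differentiable two_ne_zero) hr0 hr'
  have hF0 : condVarNum r lam2 0 = 0 := by simp [condVarNum, hr0, hr'0]
  intro τ hτ
  constructor
  · refine le_of_hasDerivAt_le_of_le
      (f := fun τ => lam2 * (∫ s in 0..τ, s * (deriv (deriv r) s + lam2)) - lam2 ^ 3 * τ ^ 4)
      (f' := fun x => lam2 * (x * (deriv (deriv r) x + lam2)) - 4 * lam2 ^ 3 * x ^ 3)
      (fun x => ?_) (hasDerivAt_condVarNum hr) (by simp [hF0]) (fun x hx => ?_) τ hτ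
    · exact (((hG x).const_mul lam2).sub ((hasDerivAt_pow 4 x).const_mul (lam2 ^ 3))).congr_deriv
        (by norm_num; ring)
    · obtain ⟨hlo, hhi⟩ := hr' x (Ioo_subset_Ioc_self hx)
      obtain ⟨h1lo, h1hi⟩ := h1r x (Ioo_subset_Icc_self hx)
      have hgx := hg x (Ioo_subset_Ioc_self hx)
      have hx0 := hx.1.le
      nlinarith [mul_le_mul_of_nonneg_right hlo hgx,
        mul_nonneg (sub_nonneg.2 hhi) (mul_nonneg hlam.le (h1lo.trans' (by positivity))),
        mul_nonneg (mul_nonneg hx0 (sq_nonneg lam2)) (sub_nonneg.2 h1hi)]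
  · refine le_of_hasDerivAt_le_of_le (hasDerivAt_condVarNum hr)
      (g := fun τ => 4 * lam2 * ∫ s in 0..τ, s * (deriv (deriv r) s + lam2))
      (fun x => (hG x).const_mul (4 * lam2)) (by simp [hF0]) (fun x hx => ?_) τ hτ
    obtain ⟨hlo, hhi⟩ := hr' x (Ioo_subset_Ioc_self hx)
    obtain ⟨h1lo, -⟩ := h1r x (Ioo_subset_Icc_self hx)
    have hgx := hg x (Ioo_subset_Ioc_self hx)
    have hx0 := hx.1.le
    nlinarith [mul_le_mul_of_nonneg_right hhi hgx,
      mul_nonneg (hlo.trans' (by positivity)) (mul_nonneg hlam.le (h1lo.trans' (by positivity)))]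

theorem integrableOn_excess_div_iff_integrableOn_condVar_div_sqrt (hr : ContDiff ℝ 2 r)
    (hr0 : r 0 = 1) (hr'0 : deriv r 0 = 0) (hlam : 0 < lam2) (hδ : 0 < δ)
    (hg : ∀ τ ∈ Ioc 0 δ, 0 ≤ deriv (deriv r) τ + lam2)
    (hr' : ∀ τ ∈ Ioc 0 δ, lam2 / 2 * τ ≤ -deriv r τ ∧ -deriv r τ ≤ 2 * lam2 * τ)
    (hrnn : ∀ τ ∈ Ioc 0 δ, 0 ≤ r τ) :
    IntegrableOn (fun τ => (deriv (deriv r) τ + lam2) / τ) (Ioc 0 δ) ↔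
      IntegrableOn (fun τ => (lam2 - deriv r τ ^ 2 / (1 - r τ ^ 2)) / √(1 - r τ ^ 2))
        (Ioc 0 δ) := by
  have hr''c : Continuous (deriv (deriv r)) := hr.deriv'.continuous_deriv le_rfl
  rw [integrableOn_div_iff_integrableOn_primitive_div_pow_three
    (g := fun τ => deriv (deriv r) τ + lam2) (hr''c.add continuous_const) hδ hg]
  set G : ℝ → ℝ := fun τ => ∫ s in 0..τ, s * (deriv (deriv r) s + lam2)
  set K₁ : ℝ := lam2 / 4 * √(lam2 / 4)
  set K₂ : ℝ := 2 * lam2 * √(2 * lam2)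
  have hP := one_sub_sq_bounds_of_deriv_bounds (hr.differentiable two_ne_zero) hr0 hr' hrnn
    hlam.le
  have hF := condVarNum_bounds hr hr0 hr'0 hlam hg hr'
  have hG0 : ∀ τ ∈ Ioc 0 δ, 0 ≤ G τ := fun τ hτ =>
    integral_id_mul_nonneg hτ.1.le fun s hs => hg s ⟨hs.1, hs.2.trans hτ.2⟩
  have hbounds : ∀ τ ∈ Ioc 0 δ,
      lam2 / K₂ * (G τ / τ ^ 3) - lam2 ^ 3 / K₁ * τ
          ≤ (lam2 - deriv r τ ^ 2 / (1 - r τ ^ 2)) / √(1 - r τ ^ 2) ∧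
        (lam2 - deriv r τ ^ 2 / (1 - r τ ^ 2)) / √(1 - r τ ^ 2) ≤ 4 * lam2 / K₁ * (G τ / τ ^ 3) := by
    intro τ hτ
    obtain ⟨hPlo, hPhi⟩ := hP τ hτ
    have hP0 : 0 < 1 - r τ ^ 2 := hPlo.trans_lt' (by have := hτ.1; positivity)
    have hσ : (lam2 - deriv r τ ^ 2 / (1 - r τ ^ 2)) / √(1 - r τ ^ 2)
        = condVarNum r lam2 τ / ((1 - r τ ^ 2) * √(1 - r τ ^ 2)) := by
      rw [condVarNum]
      field_simp
    obtain ⟨hDlo, hDhi⟩ :=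
      mul_sqrt_bounds_of_sq_bounds (by positivity) hτ.1.le hPlo hPhi
    rw [hσ]
    exact div_bounds_of_pow_three_bounds hτ.1 (by positivity) (hG0 τ hτ) hlam.le (by positivity)
      (by positivity) hDlo hDhi (hF τ (Ioc_subset_Icc_self hτ)).1
      (hF τ (Ioc_subset_Icc_self hτ)).2
  have hrm : Measurable r := hr.continuous.measurable
  have hGm : Measurable G := (intervalIntegral.continuous_primitive (fun a b =>
    ((continuous_id.mul (hr''c.add continuous_const)).intervalIntegrable a b)) 0).measurable
  refine (integrableOn_iff_of_le_of_le (c₁ := lam2 / K₂) (c₂ := 4 * lam2 / K₁)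
    (C := lam2 ^ 3 / K₁ * δ) measurableSet_Ioc measure_Ioc_lt_top.ne (by positivity)
    (Measurable.aestronglyMeasurable (by fun_prop)) (Measurable.aestronglyMeasurable (by fun_prop))
    (fun τ hτ => div_nonneg (hG0 τ hτ) (pow_pos hτ.1 3).le)
    (fun τ hτ => (hbounds τ hτ).1.trans' ?_) (fun τ hτ => (hbounds τ hτ).2)).symm
  gcongr
  exact hτ.2

end Covariance

theorem stmt_11_general (r : ℝ → ℝ) (δ₀ : ℝ) (hδ₀ : 0 < δ₀)
    (hC2 : ContDiff ℝ 2 r) (hr0 : r 0 = 1)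
    (lam2 : ℝ) (hlam2 : deriv (deriv r) 0 = -lam2)
    (hlim : Filter.Tendsto (fun τ => -(deriv r τ) / τ) (nhdsWithin 0 (Set.Ioi 0))
      (nhds lam2))
    (hrlt : ∀ τ ∈ Set.Ioc (0 : ℝ) δ₀, r τ < 1)
    (hmono : ∀ τ ∈ Set.Ioc (0 : ℝ) δ₀, deriv (deriv r) 0 ≤ deriv (deriv r) τ) :
    ∃ δ > 0,
      (IntegrableOn (fun τ => (deriv (deriv r) τ - deriv (deriv r) 0) / τ)
          (Set.Ioc 0 δ) volume
        ↔ IntegrableOn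
            (fun τ => (-(deriv (deriv r) 0) - (deriv r τ) ^ 2 / (1 - (r τ) ^ 2))
              / Real.sqrt (1 - (r τ) ^ 2)) (Set.Ioc 0 δ) volume) := by
  rw [hlam2] at hmono
  have hr'0 : deriv r 0 = 0 := neg_eq_zero.1 <|
    eq_zero_of_tendsto_div_nhdsGT (hC2.continuous_deriv one_le_two).neg.continuousWithinAt hlim
  have hlam : 0 < lam2 :=
    pos_of_neg_le_deriv_deriv hC2 hr'0 hδ₀ hmono (hr0 ▸ hrlt δ₀ ⟨hδ₀, le_rfl⟩)
  have hev : ∀ᶠ τ in 𝓝[>] 0,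
      τ ≤ δ₀ ∧ (lam2 / 2 * τ ≤ -deriv r τ ∧ -deriv r τ ≤ 2 * lam2 * τ) ∧ 0 ≤ r τ := by
    have hratio := hlim.eventually
      (Ioo_mem_nhds (a := lam2 / 2) (b := 2 * lam2) (half_lt_self hlam) (by linarith))
    have hpos : ∀ᶠ τ in 𝓝 0, 0 < r τ :=
      continuousAt_const.eventually_lt hC2.continuous.continuousAt (by rw [hr0]; exact one_pos)
    filter_upwards [Ioc_mem_nhdsGT hδ₀, hratio, nhdsWithin_le_nhds hpos] with τ hτ hτr hτp
    rw [lt_div_iff₀ hτ.1, div_lt_iff₀ hτ.1] at hτr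
    exact ⟨hτ.2, ⟨hτr.1.le, hτr.2.le⟩, hτp.le⟩
  obtain ⟨δ, hδ, hδsub⟩ := mem_nhdsGT_iff_exists_Ioc_subset.1 hev
  refine ⟨δ, hδ, ?_⟩
  simp only [hlam2, sub_neg_eq_add, neg_neg]
  exact integrableOn_excess_div_iff_integrableOn_condVar_div_sqrt hC2 hr0 hr'0 hlam hδ
    (fun τ hτ => neg_le_iff_add_nonneg.1 (hmono τ ⟨hτ.1, (hδsub hτ).1⟩))
    (fun τ hτ => (hδsub hτ).2.1) (fun τ hτ => (hδsub hτ).2.2)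

/-- Geman's lemma: for the covariance `r` of a centered stationary Gaussian process with
`r(0) = 1`, `r` twice (continuously) differentiable, `λ₂ = -r''(0)` and
`-r'(τ)/τ → λ₂` as `τ → 0⁺`, setting `σ²(τ) = -r''(0) - r'(τ)²/(1 - r(τ)²)`, there is a
`δ > 0` such that `∫₀^δ (r''(τ) - r''(0))/τ dτ < ∞` iff
`∫₀^δ σ²(τ)/(1 - r(τ)²)^{1/2} dτ < ∞`. -/
theorem stmt_11 (r : ℝ → ℝ) (δ₀ : ℝ) (hδ₀ : 0 < δ₀)
    (hC2 : ContDiff ℝ 2 r) (hr0 : r 0 = 1)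
    (lam2 : ℝ) (hlam2 : deriv (deriv r) 0 = -lam2)
    (hlim : Filter.Tendsto (fun τ => -(deriv r τ) / τ) (nhdsWithin 0 (Set.Ioi 0))
      (nhds lam2))
    (hrlt : ∀ τ ∈ Set.Ioc (0 : ℝ) δ₀, r τ < 1)
    (hmono : ∀ τ ∈ Set.Ioc (0 : ℝ) δ₀, deriv (deriv r) 0 ≤ deriv (deriv r) τ)
    (heven : ∀ τ, r (-τ) = r τ) :
    ∃ δ > 0,
      (IntegrableOn (fun τ => (deriv (deriv r) τ - deriv (deriv r) 0) / τ)
          (Set.Ioc 0 δ) volume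
        ↔ IntegrableOn
            (fun τ => (-(deriv (deriv r) 0) - (deriv r τ) ^ 2 / (1 - (r τ) ^ 2))
              / Real.sqrt (1 - (r τ) ^ 2)) (Set.Ioc 0 δ) volume) :=
  stmt_11_general r δ₀ hδ₀ hC2 hr0 lam2 hlam2 hlim hrlt hmono
end

section
/- Quantitative nondegeneracy of stationary Gaussian covariances: let X be a centered stationary Gaussian field on ℝ^d with continuous covariance r whose spectral measure is not concentrated on a set of Lebesgue measure zero, and let T̄ ⊂ ℝ^d be compact. Then there exists C > 0 such that for all s, t ∈ T̄, r²(0) - r²(s - t) ≥ C ‖s - t‖². -/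
/-!
Since `r(0)² - r(τ)² = (r(0) - |r(τ)|)(r(0) + |r(τ)|) ≥ r(0) ∫ (1 - |cos⟨τ,λ⟩|) dF` and
`1 - |cos x| ≥ sin² x / 2`, it suffices to bound `g(τ) = ∫ sin²⟨τ,λ⟩ dF` below by `c ‖τ‖²`.
For `τ ≠ 0` the integrand vanishes only on countably many parallel hyperplanes, a Lebesgue-null
set, so `g(τ) > 0`. Near `τ = 0`, `sin² x ≥ (2/π)² x²` gives
`g(τ) ≥ (2/π)² ∫_{‖λ‖ ≤ R} ⟨τ,λ⟩² dF`, a positive definite quadratic form once `R` is so large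
that `F` restricted to the ball is still not singular. Compactness does the rest.
-/

open MeasureTheory Metric Set
open scoped Real RealInnerProductSpace

lemma sq_mul_sq_le_sin_sq {x : ℝ} (hx : |x| ≤ π / 2) : (2 / π) ^ 2 * x ^ 2 ≤ Real.sin x ^ 2 := by
  rw [← sq_abs x, ← sq_abs (Real.sin x), ← mul_pow]
  exact pow_le_pow_left₀ (by positivity) (Real.mul_abs_le_abs_sin hx) 2

lemma measureReal_mul_integral_one_sub_sq_le {α : Type*} [MeasurableSpace α] (F : Measure α)
    [IsFiniteMeasure F] {f : α → ℝ} (hf : AEStronglyMeasurable f F) (hf1 : ∀ x, |f x| ≤ 1) :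
    F.real univ * ∫ x, (1 - f x ^ 2) ∂F ≤ 2 * (F.real univ ^ 2 - (∫ x, f x ∂F) ^ 2) := by
  have hint : Integrable f F := .of_bound hf 1 (ae_of_all _ hf1)
  have hsq_int : Integrable (fun x ↦ f x ^ 2) F := .of_bound (hf.pow 2) 1 (ae_of_all _ fun x ↦ by
    simpa [abs_pow] using hf1 x)
  set M := F.real univ
  set a := ∫ x, f x ∂F
  have hone_sub_sq : ∫ x, (1 - f x ^ 2) ∂F ≤ 2 * (M - ∫ x, |f x| ∂F) := by
    calc ∫ x, (1 - f x ^ 2) ∂F ≤ ∫ x, 2 * (1 - |f x|) ∂F :=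
          integral_mono ((integrable_const 1).sub hsq_int)
            (((integrable_const 1).sub hint.abs).const_mul 2) fun x ↦ by
            nlinarith [sq_abs (f x), sq_nonneg (1 - |f x|)]
      _ = 2 * (M - ∫ x, |f x| ∂F) := by
        rw [integral_const_mul, integral_sub (integrable_const 1) hint.abs, integral_const,
          smul_eq_mul, mul_one]
  have habs : |a| ≤ ∫ x, |f x| ∂F := abs_integral_le_integral_abs
  have hM : ∫ x, |f x| ∂F ≤ M := by
    simpa using integral_mono hint.abs (integrable_const 1) hf1
  nlinarith [sq_abs a, abs_nonneg a, measureReal_nonneg (μ := F) (s := univ)]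

lemma integral_pos_of_not_mutuallySingular {α : Type*} [MeasurableSpace α] {μ F : Measure α}
    (hF : ¬ μ ⟂ₘ F) {f : α → ℝ} (hf : Integrable f F) (hf0 : 0 ≤ f)
    (hzero : μ {x | f x = 0} = 0) : 0 < ∫ x, f x ∂F := by
  rw [integral_pos_iff_support_of_nonneg hf0 hf, pos_iff_ne_zero]
  intro hsupp
  refine hF ⟨toMeasurable μ {x | f x = 0}, measurableSet_toMeasurable _ _,
    by rwa [measure_toMeasurable], measure_mono_null (fun x hx ↦ ?_) hsupp⟩
  exact Function.mem_support.2 fun h0 ↦ hx (subset_toMeasurable _ _ h0)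

lemma exists_not_mutuallySingular_restrict_closedBall {α : Type*} [PseudoMetricSpace α]
    [MeasurableSpace α] {μ F : Measure α} (hF : ¬ μ ⟂ₘ F) (x : α) :
    ∃ R : ℝ, ¬ μ ⟂ₘ F.restrict (closedBall x R) := by
  by_contra! h
  refine hF ((Measure.MutuallySingular.sum_right.2 fun n : ℕ ↦ h n).mono le_rfl ?_)
  calc F = F.restrict (⋃ n : ℕ, closedBall x n) := by
        rw [iUnion_closedBall_nat, Measure.restrict_univ]
    _ ≤ _ := Measure.restrict_iUnion_le

lemma exists_pos_mul_norm_sq_le_of_homogeneous {V : Type*} [NormedAddCommGroup V]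
    [NormedSpace ℝ V] [ProperSpace V] {q : V → ℝ} (hq : Continuous q)
    (hsmul : ∀ (t : ℝ) u, q (t • u) = t ^ 2 * q u) (hpos : ∀ u ≠ 0, 0 < q u) :
    ∃ m > 0, ∀ u, m * ‖u‖ ^ 2 ≤ q u := by
  obtain ⟨m, hm, hmq⟩ := (isCompact_sphere (0 : V) 1).exists_forall_le' hq.continuousOn
    fun u hu ↦ hpos u (ne_zero_of_mem_sphere one_ne_zero ⟨u, hu⟩)
  refine ⟨m, hm, fun u ↦ ?_⟩
  rcases eq_or_ne u 0 with rfl | hu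
  · simp [show q 0 = 0 by simpa using hsmul 0 0]
  have hunit : ‖u‖⁻¹ • u ∈ sphere (0 : V) 1 := by simp [norm_smul, hu]
  calc m * ‖u‖ ^ 2 ≤ ‖u‖ ^ 2 * q (‖u‖⁻¹ • u) := by rw [mul_comm]; gcongr; exact hmq _ hunit
    _ = q u := by rw [← hsmul, smul_smul, mul_inv_cancel₀ (norm_ne_zero_iff.2 hu), one_smul]

lemma IsCompact.exists_pos_mul_norm_sq_le {V : Type*} [NormedAddCommGroup V] {g : V → ℝ}
    (hg : Continuous g) (hpos : ∀ τ ≠ 0, 0 < g τ) {ε c : ℝ} (hε : 0 < ε) (hc : 0 < c)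
    (hloc : ∀ τ, ‖τ‖ ≤ ε → c * ‖τ‖ ^ 2 ≤ g τ) {K : Set V} (hK : IsCompact K) :
    ∃ C > 0, ∀ τ ∈ K, C * ‖τ‖ ^ 2 ≤ g τ := by
  set K' := K ∩ {τ | ε ≤ ‖τ‖}
  have hK' : IsCompact K' := hK.inter_right (isClosed_le continuous_const continuous_norm)
  have hnorm : ∀ τ ∈ K', 0 < ‖τ‖ := fun τ hτ ↦ hε.trans_le hτ.2
  obtain ⟨a, ha, haK⟩ := hK'.exists_forall_le' (f := fun τ ↦ g τ / ‖τ‖ ^ 2)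
    (hg.continuousOn.div (continuous_norm.pow 2).continuousOn
      fun τ hτ ↦ (pow_pos (hnorm τ hτ) 2).ne')
    fun τ hτ ↦ div_pos (hpos τ (norm_pos_iff.1 (hnorm τ hτ))) (pow_pos (hnorm τ hτ) 2)
  refine ⟨min c a, lt_min hc ha, fun τ hτ ↦ ?_⟩
  rcases le_or_gt ‖τ‖ ε with h | h
  · exact (mul_le_mul_of_nonneg_right (min_le_left _ _) (sq_nonneg _)).trans (hloc τ h)
  · have hτa := haK τ ⟨hτ, h.le⟩
    rw [le_div_iff₀ (pow_pos (hε.trans h) 2)] at hτa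
    exact (mul_le_mul_of_nonneg_right (min_le_right _ _) (sq_nonneg _)).trans hτa

section InnerProductSpace

variable {E : Type*} [NormedAddCommGroup E] [InnerProductSpace ℝ E] [FiniteDimensional ℝ E]
  [MeasurableSpace E] [BorelSpace E]

lemma addHaar_inner_mem_eq_zero (μ : Measure E) [μ.IsAddHaarMeasure] {τ : E} (hτ : τ ≠ 0)
    {N : Set ℝ} (hN : MeasurableSet N) (hN0 : volume N = 0) : μ {l | ⟪τ, l⟫ ∈ N} = 0 := by
  have hsurj : Function.Surjective (innerₛₗ ℝ τ) :=
    LinearMap.surjective_iff_ne_zero.2 fun h ↦ hτ (inner_self_eq_zero.1 (LinearMap.congr_fun h τ))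
  have hae := (ae_comp_linearMap_mem_iff (innerₛₗ ℝ τ) μ volume hsurj hN.compl).2
    (compl_mem_ae_iff.2 hN0)
  exact measure_eq_zero_iff_ae_notMem.2 hae

lemma integrable_sin_inner_sq (F : Measure E) [IsFiniteMeasure F] (τ : E) :
    Integrable (fun l ↦ Real.sin ⟪τ, l⟫ ^ 2) F :=
  .of_bound (by fun_prop) 1 (ae_of_all _ fun l ↦ by simp [Real.abs_sin_le_one])

lemma continuous_integral_sin_inner_sq (F : Measure E) [IsFiniteMeasure F] :
    Continuous fun τ : E ↦ ∫ l, Real.sin ⟪τ, l⟫ ^ 2 ∂F :=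
  continuous_of_dominated (bound := fun _ ↦ 1) (fun _ ↦ by fun_prop)
    (fun _ ↦ ae_of_all _ fun _ ↦ by simp [Real.abs_sin_le_one]) (integrable_const 1)
    (ae_of_all _ fun _ ↦ by fun_prop)

lemma integral_sin_inner_sq_pos (μ : Measure E) [μ.IsAddHaarMeasure] {F : Measure E}
    [IsFiniteMeasure F] (hF : ¬ μ ⟂ₘ F) {τ : E} (hτ : τ ≠ 0) :
    0 < ∫ l, Real.sin ⟪τ, l⟫ ^ 2 ∂F := by
  have hcount : {x : ℝ | Real.sin x = 0}.Countable :=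
    (countable_range fun n : ℤ ↦ n * π).mono fun x hx ↦ Real.sin_eq_zero_iff.1 hx
  refine integral_pos_of_not_mutuallySingular hF (integrable_sin_inner_sq F τ)
    (fun _ ↦ sq_nonneg _) ?_
  simpa using addHaar_inner_mem_eq_zero μ hτ hcount.measurableSet (hcount.measure_zero _)

lemma exists_pos_mul_norm_sq_le_setIntegral_inner_sq (μ : Measure E) [μ.IsAddHaarMeasure]
    {F : Measure E} [IsFiniteMeasure F] {R : ℝ} (hF : ¬ μ ⟂ₘ F.restrict (closedBall 0 R)) :
    ∃ m > 0, ∀ u : E, m * ‖u‖ ^ 2 ≤ ∫ l in closedBall 0 R, ⟪u, l⟫ ^ 2 ∂F := by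
  refine exists_pos_mul_norm_sq_le_of_homogeneous
    (continuous_parametric_integral_of_continuous (by fun_prop) (isCompact_closedBall 0 R))
    (fun t u ↦ ?_) fun u hu ↦ ?_
  · simp_rw [real_inner_smul_left, mul_pow]
    exact integral_const_mul _ _
  · refine integral_pos_of_not_mutuallySingular hF
      ((by fun_prop : Continuous fun l ↦ ⟪u, l⟫ ^ 2).continuousOn.integrableOn_compact
        (isCompact_closedBall 0 R)) (fun _ ↦ sq_nonneg _) ?_
    simpa using addHaar_inner_mem_eq_zero μ hu (measurableSet_singleton 0) (measure_singleton 0)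

lemma exists_pos_mul_norm_sq_le_integral_sin_inner_sq (μ : Measure E) [μ.IsAddHaarMeasure]
    {F : Measure E} [IsFiniteMeasure F] (hF : ¬ μ ⟂ₘ F) :
    ∃ ε > 0, ∃ c > 0, ∀ τ : E, ‖τ‖ ≤ ε → c * ‖τ‖ ^ 2 ≤ ∫ l, Real.sin ⟪τ, l⟫ ^ 2 ∂F := by
  obtain ⟨R, hR⟩ := exists_not_mutuallySingular_restrict_closedBall hF 0
  obtain ⟨m, hm, hmq⟩ := exists_pos_mul_norm_sq_le_setIntegral_inner_sq μ hR
  have hR0 : 0 ≤ R := by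
    by_contra! h
    exact hR (by simp [closedBall_eq_empty.2 h])
  refine ⟨π / 2 / (R + 1), by positivity, (2 / π) ^ 2 * m, by positivity, fun τ hτ ↦ ?_⟩
  have hsin : ∀ l ∈ closedBall (0 : E) R, (2 / π) ^ 2 * ⟪τ, l⟫ ^ 2 ≤ Real.sin ⟪τ, l⟫ ^ 2 := by
    refine fun l hl ↦ sq_mul_sq_le_sin_sq ?_
    calc |⟪τ, l⟫| ≤ ‖τ‖ * ‖l‖ := abs_real_inner_le_norm τ l
      _ ≤ π / 2 / (R + 1) * (R + 1) := by
        gcongr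
        linarith [mem_closedBall_zero_iff.1 hl]
      _ = π / 2 := div_mul_cancel₀ _ (by positivity)
  have hint : IntegrableOn (fun l ↦ ⟪τ, l⟫ ^ 2) (closedBall 0 R) F :=
    (by fun_prop : Continuous fun l ↦ ⟪τ, l⟫ ^ 2).continuousOn.integrableOn_compact
      (isCompact_closedBall 0 R)
  calc (2 / π) ^ 2 * m * ‖τ‖ ^ 2 ≤ (2 / π) ^ 2 * ∫ l in closedBall 0 R, ⟪τ, l⟫ ^ 2 ∂F := by
        rw [mul_assoc]; gcongr; exact hmq τ
    _ = ∫ l in closedBall 0 R, (2 / π) ^ 2 * ⟪τ, l⟫ ^ 2 ∂F := (integral_const_mul _ _).symm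
    _ ≤ ∫ l in closedBall 0 R, Real.sin ⟪τ, l⟫ ^ 2 ∂F :=
        setIntegral_mono_on (hint.const_mul _) (integrable_sin_inner_sq F τ).integrableOn
          measurableSet_closedBall hsin
    _ ≤ ∫ l, Real.sin ⟪τ, l⟫ ^ 2 ∂F :=
        setIntegral_le_integral (integrable_sin_inner_sq F τ) (ae_of_all _ fun _ ↦ sq_nonneg _)

end InnerProductSpace

/-- Quantitative nondegeneracy of stationary Gaussian covariances: if
`r(τ) = ∫ cos⟨τ,λ⟩ dF(λ)` is the covariance of a centered stationary Gaussian field on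
`ℝ^d` whose (finite) spectral measure `F` is not concentrated on a Lebesgue-null set, then
on every compact `K` there is `C > 0` with `r(0)² - r(s-t)² ≥ C ‖s-t‖²` for `s, t ∈ K`. -/
theorem stmt_17 (d : ℕ) (r : EuclideanSpace ℝ (Fin d) → ℝ)
    (F : Measure (EuclideanSpace ℝ (Fin d))) [IsFiniteMeasure F]
    (hr : ∀ τ, r τ = ∫ l, Real.cos ⟪τ, l⟫ ∂F)
    (hF : ¬ ∃ s : Set (EuclideanSpace ℝ (Fin d)),
      MeasurableSet s ∧ volume s = 0 ∧ F sᶜ = 0)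
    (K : Set (EuclideanSpace ℝ (Fin d))) (hK : IsCompact K) :
    ∃ C > 0, ∀ s ∈ K, ∀ t ∈ K, C * ‖s - t‖ ^ 2 ≤ r 0 ^ 2 - r (s - t) ^ 2 := by
  have hF : ¬ volume ⟂ₘ F := hF
  have hM : 0 < F.real univ := by
    refine ENNReal.toReal_pos (fun h ↦ hF ?_) (measure_ne_top _ _)
    rw [Measure.measure_univ_eq_zero.1 h]
    exact .zero_right
  have hKK : IsCompact ((fun p ↦ p.1 - p.2) '' K ×ˢ K) :=
    (hK.prod hK).image (continuous_fst.sub continuous_snd)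
  obtain ⟨ε, hε, c, hc, hloc⟩ := exists_pos_mul_norm_sq_le_integral_sin_inner_sq volume hF
  obtain ⟨C, hC, hCK⟩ := hKK.exists_pos_mul_norm_sq_le (continuous_integral_sin_inner_sq F)
    (fun τ hτ ↦ integral_sin_inner_sq_pos volume hF hτ) hε hc hloc
  refine ⟨F.real univ / 2 * C, by positivity, fun s hs t ht ↦ ?_⟩
  have hsin_sq := measureReal_mul_integral_one_sub_sq_le F (f := fun l ↦ Real.cos ⟪s - t, l⟫)
    (by fun_prop) fun _ ↦ Real.abs_cos_le_one _
  simp_rw [← Real.sin_sq] at hsin_sq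
  have hr0 : r 0 = F.real univ := by simp [hr]
  calc F.real univ / 2 * C * ‖s - t‖ ^ 2
        ≤ F.real univ / 2 * ∫ l, Real.sin ⟪s - t, l⟫ ^ 2 ∂F := by
        rw [mul_assoc]
        gcongr
        exact hCK _ (mem_image_of_mem _ (mk_mem_prod hs ht))
    _ ≤ r 0 ^ 2 - r (s - t) ^ 2 := by rw [hr0, hr]; linarith
end
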